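/- Let m ≥ 1 be an integer and let q be a power of 2. If m ≠ 2 or q = 2, then M_m(q) > q^{m+2}/(q^2 - 1). -/

import Mathlib

/-!
For odd `m` and `q ≥ 3`, `M_m(q)` is a product of factors `q^(2^i) + 1`, one per nonzero binary
digit of `m`, among them `q + 1`; hence `M_m(q) ≥ (q + 1) q^(m-1)`, and `(q² - 1)(q + 1) > q³`.
Apart from the easy case `q = 2, m₀ ≤ 3`, in all other cases `(q² - 1) M_m(q)` is at least
`(q + 1)(x - 1)(y - 1)` (possibly times `q`) with `x = q^a`, `y = q^b` and `q x y` the matching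
part of `q^(m+2)`. Now `(q + 1)(x - 1)(y - 1) > q x y` as soon as
`(x - q - 1)(y - q - 1) > q (q + 1)`, which holds for `x, y ≥ q²` when `q ≥ 3`, and for
`x, y ≥ 4`, `x y ≥ 64` when `q = 2`. For `q = 2` the paper's `ℓ` is `⌊log₂ (m + 1)⌋`, so that
`m₀ < 2^ℓ`.
-/

/-- `Mm m q` is the function `M_m(q)` from Definition 1.2 of the paper. -/
def Mm (m q : ℕ) : ℕ :=
  if q = 2 then
    -- `L` is the largest positive integer `ℓ` with `2^ℓ - 1 ≤ m`
    let L := Nat.findGreatest (fun l => 0 < l ∧ 2 ^ l - 1 ≤ m) m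
    let m0 := m - (2 ^ L - 1)
    if m0 ≤ 3 then q ^ m0 * (q ^ 2 ^ L - 1)
    else if m0 < 2 ^ (L - 1) then
      if Odd m0 then (q ^ (2 ^ (L - 1) + m0) - 1) * (q ^ 2 ^ (L - 1) - 1)
      else q * (q ^ (2 ^ (L - 1) + m0 - 1) - 1) * (q ^ 2 ^ (L - 1) - 1)
    else if m0 = 2 ^ (L - 1) then (q ^ 2 ^ L + 1) * (q ^ 2 ^ (L - 1) - 1)
    else if Odd m0 then (q ^ m0 - 1) * (q ^ 2 ^ L - 1)
    else q * (q ^ (m0 - 1) - 1) * (q ^ 2 ^ L - 1)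
  else if Odd m then
    -- the product of `q^(2^i) + 1` over the summands `2^i` of the 2-adic expansion of `m`
    ∏ i ∈ Finset.range (m + 1), if m.testBit i then q ^ 2 ^ i + 1 else 1
  else if m = 2 then q ^ 2 + 1
  else
    -- `L` is the largest positive integer `ℓ` with `2^ℓ + 2^(ℓ-1) ≤ m`
    let L := Nat.findGreatest (fun l => 0 < l ∧ 2 ^ l + 2 ^ (l - 1) ≤ m) m
    (q ^ (m - 2 ^ L + 1) - 1) * (q ^ 2 ^ L - 1) / (q - 1)


open Finset

-- Over `ℤ`, `(q + 1)(x - 1)(y - 1) - q x y = (x - (q + 1))(y - (q + 1)) - q (q + 1)`.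
theorem mul_mul_lt_succ_mul_pred_mul_pred {q x y : ℕ} (hx : q + 1 ≤ x) (hy : q + 1 ≤ y)
    (h : q * (q + 1) < (x - (q + 1)) * (y - (q + 1))) :
    q * (x * y) < (q + 1) * ((x - 1) * (y - 1)) := by
  zify [hx, hy, show 1 ≤ x by omega, show 1 ≤ y by omega] at h ⊢
  linear_combination h

theorem pow_add_add_one_lt {q a b : ℕ} (hq : 3 ≤ q) (ha : 2 ≤ a) (hb : 2 ≤ b) :
    q ^ (a + b + 1) < (q + 1) * ((q ^ a - 1) * (q ^ b - 1)) := by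
  have hq2 : 2 * (q + 1) ≤ q ^ 2 := by nlinarith
  have hqa : 2 * (q + 1) ≤ q ^ a := hq2.trans (Nat.pow_le_pow_right (by omega) ha)
  have hqb : 2 * (q + 1) ≤ q ^ b := hq2.trans (Nat.pow_le_pow_right (by omega) hb)
  have hgap : q * (q + 1) < (q ^ a - (q + 1)) * (q ^ b - (q + 1)) :=
    calc q * (q + 1) < (q + 1) * (q + 1) := by nlinarith
      _ ≤ _ := Nat.mul_le_mul (by omega) (by omega)
  calc q ^ (a + b + 1) = q * (q ^ a * q ^ b) := by ring
    _ < _ := mul_mul_lt_succ_mul_pred_mul_pred (by omega) (by omega) hgap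

theorem two_pow_add_add_one_lt {a b : ℕ} (ha : 2 ≤ a) (hb : 2 ≤ b) (hab : 6 ≤ a + b) :
    2 ^ (a + b + 1) < 3 * ((2 ^ a - 1) * (2 ^ b - 1)) := by
  have h2a : 4 ≤ 2 ^ a := Nat.pow_le_pow_right (n := 2) (by omega) ha
  have h2b : 4 ≤ 2 ^ b := Nat.pow_le_pow_right (n := 2) (by omega) hb
  have h2ab : 64 ≤ 2 ^ a * 2 ^ b := by
    rw [← pow_add]; exact Nat.pow_le_pow_right (n := 2) (by omega) hab
  have hgap : 2 * 3 < (2 ^ a - 3) * (2 ^ b - 3) := by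
    zify [h2a.trans' (by omega : 3 ≤ 4), h2b.trans' (by omega : 3 ≤ 4)] at h2a h2b h2ab ⊢
    nlinarith [mul_nonneg (by linarith : (0 : ℤ) ≤ 2 ^ a - 4) (by linarith : (0 : ℤ) ≤ 2 ^ b - 4)]
  calc 2 ^ (a + b + 1) = 2 * (2 ^ a * 2 ^ b) := by ring
    _ < _ := mul_mul_lt_succ_mul_pred_mul_pred (by omega) (by omega) hgap

theorem two_pow_add_add_two_lt {a b : ℕ} (ha : 2 ≤ a) (hb : 2 ≤ b) (hab : 6 ≤ a + b) :
    2 ^ (a + b + 2) < 3 * (2 * (2 ^ a - 1) * (2 ^ b - 1)) :=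
  calc 2 ^ (a + b + 2) = 2 ^ (a + b + 1) * 2 := pow_succ 2 _
    _ < 3 * ((2 ^ a - 1) * (2 ^ b - 1)) * 2 :=
      Nat.mul_lt_mul_of_pos_right (two_pow_add_add_one_lt ha hb hab) two_pos
    _ = _ := by ring

def bitProd (q m n : ℕ) : ℕ :=
  ∏ i ∈ range n, if m.testBit i then q ^ 2 ^ i + 1 else 1

theorem bitProd_succ (q m n : ℕ) :
    bitProd q m (n + 1) = (if m.testBit 0 then q + 1 else 1) * bitProd (q ^ 2) (m / 2) n := by
  rw [bitProd, prod_range_succ', mul_comm, bitProd]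
  congr 1
  · simp
  · refine prod_congr rfl fun i _ => ?_
    rw [Nat.testBit_succ, pow_succ', pow_mul]

theorem pow_le_bitProd (q : ℕ) {m n : ℕ} (hm : m < 2 ^ n) : q ^ m ≤ bitProd q m n := by
  induction n generalizing q m with
  | zero => simp_all [bitProd]
  | succ n ih =>
    rw [bitProd_succ]
    calc q ^ m = q ^ (m % 2) * (q ^ 2) ^ (m / 2) := by rw [← pow_mul, ← pow_add, Nat.mod_add_div]
      _ ≤ _ := Nat.mul_le_mul ?_ (ih _ (by omega))
    rcases Nat.mod_two_eq_zero_or_one m with h | h <;> simp [Nat.testBit_zero, h]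

theorem succ_mul_pow_le_bitProd (q : ℕ) {m : ℕ} (hm : Odd m) :
    (q + 1) * q ^ (m - 1) ≤ bitProd q m (m + 1) := by
  rw [bitProd_succ, Nat.testBit_zero, if_pos (by simpa [Nat.odd_iff] using hm)]
  refine Nat.mul_le_mul_left _ ?_
  calc q ^ (m - 1) = (q ^ 2) ^ (m / 2) := by rw [← pow_mul]; congr 1; grind
    _ ≤ _ := pow_le_bitProd _ ((Nat.div_le_self m 2).trans_lt m.lt_two_pow_self)

theorem pow_three_lt_sq_sub_one_mul_succ {q : ℕ} (hq : 2 ≤ q) : q ^ 3 < (q ^ 2 - 1) * (q + 1) := by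
  zify [Nat.one_le_pow 2 q (by omega)]
  nlinarith

theorem sq_sub_one_mul_div_sub_one {q n : ℕ} (h : q - 1 ∣ n) :
    (q ^ 2 - 1) * (n / (q - 1)) = (q + 1) * n := by
  rw [show q ^ 2 - 1 = (q + 1) * (q - 1) by simpa using Nat.sq_sub_sq q 1, mul_assoc,
    Nat.mul_div_cancel' h]

theorem Mm_lower_bound_of_three_le {q m : ℕ} (hq : 3 ≤ q) (hm : 1 ≤ m) (hm2 : m ≠ 2) :
    q ^ (m + 2) < (q ^ 2 - 1) * Mm m q := by
  rw [Mm, if_neg (by omega)]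
  rcases Nat.even_or_odd m with hm_even | hm_odd
  · rw [if_neg (Nat.not_odd_iff_even.2 hm_even), if_neg hm2]
    dsimp only
    set L := Nat.findGreatest (fun l => 0 < l ∧ 2 ^ l + 2 ^ (l - 1) ≤ m) m
    obtain ⟨hL, hLm⟩ : 0 < L ∧ 2 ^ L + 2 ^ (L - 1) ≤ m :=
      Nat.findGreatest_spec (m := 1) (P := fun l => 0 < l ∧ 2 ^ l + 2 ^ (l - 1) ≤ m) hm
        ⟨one_pos, by grind⟩
    have h2L : 2 ≤ 2 ^ L := Nat.le_self_pow (by omega) 2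
    have hL1 : 1 ≤ 2 ^ (L - 1) := Nat.one_le_two_pow
    rw [sq_sub_one_mul_div_sub_one (dvd_mul_of_dvd_right (Nat.sub_one_dvd_pow_sub_one q _) _)]
    calc q ^ (m + 2) = q ^ ((m - 2 ^ L + 1) + 2 ^ L + 1) := by congr 1; omega
      _ < _ := pow_add_add_one_lt hq (by omega) h2L
  · rw [if_pos hm_odd]
    calc q ^ (m + 2) = q ^ 3 * q ^ (m - 1) := by rw [← pow_add]; congr 1; omega
      _ < (q ^ 2 - 1) * (q + 1) * q ^ (m - 1) :=
        Nat.mul_lt_mul_of_pos_right (pow_three_lt_sq_sub_one_mul_succ (by omega)) (by positivity)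
      _ ≤ _ := by rw [mul_assoc]; exact Nat.mul_le_mul_left _ (succ_mul_pow_le_bitProd q hm_odd)

theorem findGreatest_two_pow_sub_one_le_eq_log {m : ℕ} (hm : 1 ≤ m) :
    Nat.findGreatest (fun l => 0 < l ∧ 2 ^ l - 1 ≤ m) m = Nat.log 2 (m + 1) := by
  have hlog := Nat.pow_log_le_self 2 (x := m + 1) (by omega)
  have hlog_succ := Nat.lt_pow_succ_log_self one_lt_two (m + 1)
  refine Nat.findGreatest_eq_iff.2 ⟨?_, fun _ => ⟨Nat.log_pos one_lt_two (by omega), by omega⟩, ?_⟩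
  · have hlog_lt := Nat.log_lt_self 2 (x := m + 1) (by omega)
    omega
  · rintro n hn - ⟨-, hnm⟩
    have hpow := Nat.pow_le_pow_right (n := 2) (by omega) hn
    omega

theorem Mm_two_lower_bound {m : ℕ} (hm : 1 ≤ m) : 2 ^ (m + 2) < 3 * Mm m 2 := by
  rw [Mm, if_pos rfl]
  dsimp only
  rw [findGreatest_two_pow_sub_one_le_eq_log hm]
  set L := Nat.log 2 (m + 1)
  have hL : 1 ≤ L := Nat.log_pos one_lt_two (by omega)
  have hLm : 2 ^ L ≤ m + 1 := Nat.pow_log_le_self 2 (by omega)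
  have hmL : m + 1 < 2 ^ (L + 1) := Nat.lt_pow_succ_log_self one_lt_two (m + 1)
  have h2L : 2 ^ L = 2 * 2 ^ (L - 1) := by rw [← pow_succ']; congr 1; omega
  rw [pow_succ] at hmL
  set m0 := m - (2 ^ L - 1)
  split_ifs with hm0 hm0_lt hm0_odd hm0_eq hm0_odd'
  · have h4 : 4 ≤ 2 ^ 2 ^ L := Nat.pow_le_pow_right (n := 2) two_pos (show 2 ≤ 2 ^ L by omega)
    calc 2 ^ (m + 2) = 2 ^ m0 * (2 * 2 ^ 2 ^ L) := by rw [← pow_succ', ← pow_add]; congr 1; omega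
      _ < 2 ^ m0 * (3 * (2 ^ 2 ^ L - 1)) := Nat.mul_lt_mul_of_pos_left (by omega) (by positivity)
      _ = _ := by ring
  · rw [show m + 2 = (2 ^ (L - 1) + m0) + 2 ^ (L - 1) + 1 by omega]
    exact two_pow_add_add_one_lt (by omega) (by omega) (by omega)
  · rw [show m + 2 = (2 ^ (L - 1) + m0 - 1) + 2 ^ (L - 1) + 2 by omega]
    exact two_pow_add_add_two_lt (by omega) (by omega) (by omega)
  · calc 2 ^ (m + 2) = 2 ^ (2 ^ L + 2 ^ (L - 1) + 1) := by congr 1; omega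
      _ < 3 * ((2 ^ 2 ^ L - 1) * (2 ^ 2 ^ (L - 1) - 1)) :=
        two_pow_add_add_one_lt (by omega) (by omega) (by omega)
      _ ≤ _ := Nat.mul_le_mul_left _
        (Nat.mul_le_mul_right _ ((Nat.sub_le _ _).trans (Nat.le_add_right _ _)))
  · rw [show m + 2 = m0 + 2 ^ L + 1 by omega]
    exact two_pow_add_add_one_lt (by omega) (by omega) (by omega)
  · rw [show m + 2 = (m0 - 1) + 2 ^ L + 2 by omega]
    exact two_pow_add_add_two_lt (by omega) (by omega) (by omega)

/-- Lemma 1.3, second part: if m ≠ 2 or q = 2, then M_m(q) > q^(m+2)/(q^2 - 1),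
understood as (q^2 - 1) · M_m(q) > q^(m+2). -/
theorem Mm_lower_bound (f q m : ℕ) (hf : 1 ≤ f) (hq : q = 2 ^ f) (hm : 1 ≤ m)
    (h : m ≠ 2 ∨ q = 2) :
    q ^ (m + 2) < (q ^ 2 - 1) * Mm m q := by
  rcases eq_or_ne q 2 with rfl | hq2
  · exact Mm_two_lower_bound hm
  · have hq1 : 1 < q := hq ▸ Nat.one_lt_two_pow (by omega)
    exact Mm_lower_bound_of_three_le (by omega) hm (h.resolve_right hq2)
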